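/- arXiv:2101.12662 — 6 statements merged into one kernel-verified Lean document; each statement's English description precedes it below -/
import Mathlib

section
/- Let a, b, Δt be real numbers with Δt > 0, a + b > 0, and a − b > 0, let B = [[a, b], [b, a]], and let M = exp(−Δt·B). For every finitely supported sequence ξ : ℤ → ℝ² (i.e., ξ_j = 0 for all but finitely many j), the total variation after applying M pointwise does not increase: Σ_{j∈ℤ} ‖M ξ_{j+1} − M ξ_j‖₁ ≤ Σ_{j∈ℤ} ‖ξ_{j+1} − ξ_j‖₁, where ‖(x, y)‖₁ = |x| + |y|. -/
/-!
Diagonalizing `[[a, b], [b, a]]` in the basis `(1, 1), (1, -1)` gives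
`exp [[a, b], [b, a]] = eᵃ [[cosh b, sinh b], [sinh b, cosh b]]`, whose columns have `ℓ¹` norm
`eᵃ (cosh b + |sinh b|) = e^(a + |b|)`. For `M = exp(-Δt B)` this is `e^(-Δt (a - |b|)) ≤ 1`, so `M`
is an `ℓ¹` contraction; applied to each difference `ξ_{j+1} - ξ_j` this bounds the total variation.
-/

open Matrix Real

theorem Matrix.exp_fin_two_circulant (a b : ℝ) :
    NormedSpace.exp !![a, b; b, a] = Real.exp a • !![cosh b, sinh b; sinh b, cosh b] := by
  set P : Matrix (Fin 2) (Fin 2) ℝ := !![1, 1; 1, -1]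
  have hPinv : P⁻¹ = !![1 / 2, 1 / 2; 1 / 2, -1 / 2] :=
    inv_eq_right_inv (by ext i j; fin_cases i <;> fin_cases j <;> norm_num [P])
  have hP : IsUnit P := by
    rw [isUnit_iff_isUnit_det, isUnit_iff_ne_zero]; norm_num [P, det_fin_two_of]
  have hdiag : !![a, b; b, a] = P * diagonal ![a + b, a - b] * P⁻¹ := by
    rw [hPinv]; ext i j; fin_cases i <;> fin_cases j <;>
      simp [P, mul_apply, Fin.sum_univ_two, vecMul_diagonal] <;> ring
  have hexp : NormedSpace.exp ![a + b, a - b] = ![Real.exp (a + b), Real.exp (a - b)] := by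
    ext i; fin_cases i <;> simp [Real.exp_eq_exp_ℝ]
  rw [hdiag, exp_conj P _ hP, exp_diagonal, hexp, hPinv]
  ext i j; fin_cases i <;> fin_cases j <;>
    simp [P, mul_apply, Fin.sum_univ_two, vecMul_diagonal, cosh_eq, sinh_eq, Real.exp_add,
      Real.exp_sub, Real.exp_neg] <;> ring

theorem Matrix.sum_abs_exp_fin_two_circulant (a b : ℝ) (j : Fin 2) :
    ∑ i, |NormedSpace.exp !![a, b; b, a] i j| = Real.exp (a + |b|) := by
  have hcol : Real.exp a * |cosh b| + Real.exp a * |sinh b| = Real.exp (a + |b|) := by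
    rw [abs_of_pos (cosh_pos b), abs_sinh, ← cosh_abs b, ← mul_add, cosh_add_sinh, Real.exp_add]
  rw [exp_fin_two_circulant]
  fin_cases j <;> simp [Fin.sum_univ_two, hcol, add_comm]

theorem Matrix.sum_abs_mulVec_le_of_sum_abs_col_le_one {m n : Type*} [Fintype m] [Fintype n]
    (M : Matrix m n ℝ) (hM : ∀ j, ∑ i, |M i j| ≤ 1) (v : n → ℝ) :
    ∑ i, |(M *ᵥ v) i| ≤ ∑ j, |v j| :=
  calc ∑ i, |(M *ᵥ v) i| ≤ ∑ i, ∑ j, |M i j| * |v j| :=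
        Finset.sum_le_sum fun i _ => (Finset.abs_sum_le_sum_abs _ _).trans_eq (by simp [abs_mul])
    _ = ∑ j, (∑ i, |M i j|) * |v j| := by rw [Finset.sum_comm]; simp [Finset.sum_mul]
    _ ≤ ∑ j, |v j| := Finset.sum_le_sum fun j _ => mul_le_of_le_one_left (abs_nonneg _) (hM j)

theorem Set.Finite.support_sub_shift {α G : Type*} [AddGroup α] [AddGroup G] {f : α → G}
    (hf : (Function.support f).Finite) (k : α) :
    (Function.support fun j => f (j + k) - f j).Finite := by
  refine ((hf.preimage (add_left_injective k).injOn).union hf).subset fun j hj => ?_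
  by_contra h
  simp_all

/-- The exact ODE step `M = exp(−Δt·B)` of `ξ_t = −Bξ`, with `B = [[a, b], [b, a]]`,
`a + b > 0`, `a − b > 0`, is total-variation-diminishing on finitely supported sequences
`ξ : ℤ → ℝ²`, where the total variation is `Σ_j ‖ξ_{j+1} − ξ_j‖₁`, `‖(x,y)‖₁ = |x| + |y|`. -/
theorem ode_step_tvd (a b Δt : ℝ) (hΔt : 0 < Δt) (hab₁ : 0 < a + b) (hab₂ : 0 < a - b)
    (B : Matrix (Fin 2) (Fin 2) ℝ) (hB : B = !![a, b; b, a])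
    (M : Matrix (Fin 2) (Fin 2) ℝ) (hM : M = NormedSpace.exp ((-Δt) • B))
    (ξ : ℤ → Fin 2 → ℝ) (hfin : (Function.support ξ).Finite) :
    ∑' j : ℤ, (|(M.mulVec (ξ (j + 1)) - M.mulVec (ξ j)) 0| +
               |(M.mulVec (ξ (j + 1)) - M.mulVec (ξ j)) 1|) ≤
    ∑' j : ℤ, (|(ξ (j + 1) - ξ j) 0| + |(ξ (j + 1) - ξ j) 1|) := by
  have hsmul : (-Δt) • B = !![-Δt * a, -Δt * b; -Δt * b, -Δt * a] := by
    rw [hB]; ext i j; fin_cases i <;> fin_cases j <;> simp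
  have hcol : ∀ j, ∑ i, |M i j| ≤ 1 := fun j => by
    have hb : |b| < a := abs_lt.2 ⟨by linarith, by linarith⟩
    rw [hM, hsmul, sum_abs_exp_fin_two_circulant, Real.exp_le_one_iff, abs_mul, abs_neg,
      abs_of_pos hΔt]
    nlinarith
  have hstep : ∀ j : ℤ, |(M *ᵥ ξ (j + 1) - M *ᵥ ξ j) 0| + |(M *ᵥ ξ (j + 1) - M *ᵥ ξ j) 1| ≤
      |(ξ (j + 1) - ξ j) 0| + |(ξ (j + 1) - ξ j) 1| := fun j => by
    simpa only [← mulVec_sub, Fin.sum_univ_two] using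
      sum_abs_mulVec_le_of_sum_abs_col_le_one M hcol (ξ (j + 1) - ξ j)
  have hsummable : Summable fun j : ℤ => |(ξ (j + 1) - ξ j) 0| + |(ξ (j + 1) - ξ j) 1| :=
    summable_of_hasFiniteSupport <| (hfin.support_sub_shift 1).subset <|
      Function.support_comp_subset (g := fun v : Fin 2 → ℝ => |v 0| + |v 1|) (by simp) _
  exact Summable.tsum_le_tsum hstep
    (hsummable.of_nonneg_of_le (fun _ => by positivity) hstep) hsummable
end

section
/- Let 0 ≤ ν ≤ 1 and let u : ℤ → ℝ be finitely supported. Define minmod(p, q) = 0 if p·q ≤ 0 and minmod(p, q) = sign(p)·min(|p|, |q|) otherwise, the limited slopes m_{j+1/2} = minmod(u_j − u_{j−1}, u_{j+1} − u_j), and the flux-limited Lax–Wendroff (minmod) update û_j = u_j − ν (u_j − u_{j−1}) − (1/2) ν (1 − ν) (m_{j+1/2} − m_{j−1/2}). Then the scheme is total-variation-diminishing: Σ_{j∈ℤ} |û_{j+1} − û_j| ≤ Σ_{j∈ℤ} |u_{j+1} − u_j|. -/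
/-- `minmod(p, q) = 0` if `p·q ≤ 0` and `sign(p)·min(|p|, |q|)` otherwise. -/
noncomputable def minmod (p q : ℝ) : ℝ :=
  if p * q ≤ 0 then 0 else Real.sign p * min |p| |q|

/-- The minmod flux-limited Lax–Wendroff update for rightward linear advection with
CFL number `ν`: `û_j = u_j − ν (u_j − u_{j−1}) − (1/2) ν (1 − ν) (m_{j+1/2} − m_{j−1/2})`
with limited slopes `m_{j+1/2} = minmod(u_j − u_{j−1}, u_{j+1} − u_j)`. -/
noncomputable def lwMinmodStep (ν : ℝ) (u : ℤ → ℝ) : ℤ → ℝ := fun j =>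
  u j - ν * (u j - u (j - 1)) -
    (1 / 2) * ν * (1 - ν) *
      (minmod (u j - u (j - 1)) (u (j + 1) - u j) -
        minmod (u (j - 1) - u (j - 2)) (u j - u (j - 1)))

lemma minmod_mul_left_nonneg (p q : ℝ) : 0 ≤ minmod p q * p := by
  unfold minmod
  split_ifs with h
  · simp
  · push_neg at h
    rcases mul_pos_iff.mp h with ⟨hp, hq⟩ | ⟨hp, hq⟩
    · rw [Real.sign_of_pos hp, abs_of_pos hp, abs_of_pos hq]
      have : 0 ≤ min p q := le_min hp.le hq.le
      nlinarith
    · rw [Real.sign_of_neg hp, abs_of_neg hp, abs_of_neg hq]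
      have : 0 ≤ min (-p) (-q) := le_min (by linarith) (by linarith)
      nlinarith

lemma minmod_mul_right_nonneg (p q : ℝ) : 0 ≤ minmod p q * q := by
  unfold minmod
  split_ifs with h
  · simp
  · push_neg at h
    rcases mul_pos_iff.mp h with ⟨hp, hq⟩ | ⟨hp, hq⟩
    · rw [Real.sign_of_pos hp, abs_of_pos hp, abs_of_pos hq]
      have : 0 ≤ min p q := le_min hp.le hq.le
      nlinarith
    · rw [Real.sign_of_neg hp, abs_of_neg hp, abs_of_neg hq]
      have : 0 ≤ min (-p) (-q) := le_min (by linarith) (by linarith)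
      nlinarith

lemma abs_minmod_le_left (p q : ℝ) : |minmod p q| ≤ |p| := by
  unfold minmod
  split_ifs with h
  · simp
  · push_neg at h
    have hp : p ≠ 0 := by
      rintro rfl; simp at h
    have hs : |Real.sign p| = 1 := by
      rcases hp.lt_or_gt with h' | h'
      · rw [Real.sign_of_neg h']; norm_num
      · rw [Real.sign_of_pos h']; norm_num
    rw [abs_mul, hs, one_mul, abs_of_nonneg (le_min (abs_nonneg p) (abs_nonneg q))]
    exact min_le_left _ _

lemma abs_minmod_le_right (p q : ℝ) : |minmod p q| ≤ |q| := by
  unfold minmod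
  split_ifs with h
  · simp
  · push_neg at h
    have hp : p ≠ 0 := by
      rintro rfl; simp at h
    have hs : |Real.sign p| = 1 := by
      rcases hp.lt_or_gt with h' | h'
      · rw [Real.sign_of_neg h']; norm_num
      · rw [Real.sign_of_pos h']; norm_num
    rw [abs_mul, hs, one_mul, abs_of_nonneg (le_min (abs_nonneg p) (abs_nonneg q))]
    exact min_le_right _ _

lemma minmod_zero_left (q : ℝ) : minmod 0 q = 0 := by
  unfold minmod; rw [if_pos (by simp)]

lemma minmod_zero_right (p : ℝ) : minmod p 0 = 0 := by
  unfold minmod; rw [if_pos (by simp)]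

/-- The forward difference. -/
noncomputable def fwd (u : ℤ → ℝ) (j : ℤ) : ℝ := u (j + 1) - u j

/-- The incremental coefficient times the difference at interface `j + 1/2`. -/
noncomputable def incr (ν : ℝ) (u : ℤ → ℝ) (j : ℤ) : ℝ :=
  ν * fwd u j + (ν * (1 - ν) / 2) *
    (minmod (fwd u j) (fwd u (j + 1)) - minmod (fwd u (j - 1)) (fwd u j))

lemma incr_mul_nonneg (ν : ℝ) (hν₀ : 0 ≤ ν) (hν₁ : ν ≤ 1) (u : ℤ → ℝ) (j : ℤ) :
    0 ≤ incr ν u j * fwd u j := by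
  set a := fwd u (j - 1)
  set b := fwd u j
  set c := fwd u (j + 1)
  have h1 : 0 ≤ minmod b c * b := minmod_mul_left_nonneg b c
  have h2 : 0 ≤ minmod a b * b := minmod_mul_right_nonneg a b
  have h3 : |minmod a b| ≤ |b| := abs_minmod_le_right a b
  have h4 : minmod a b * b ≤ b ^ 2 := by
    calc minmod a b * b ≤ |minmod a b * b| := le_abs_self _
    _ = |minmod a b| * |b| := abs_mul _ _
    _ ≤ |b| * |b| := by nlinarith [abs_nonneg b]
    _ = b ^ 2 := by rw [← sq_abs]; ring
  have hc : 0 ≤ ν * (1 - ν) / 2 := by nlinarith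
  have hcν : ν * (1 - ν) / 2 ≤ ν := by nlinarith
  unfold incr
  nlinarith [mul_nonneg hc h1, mul_nonneg hc (sub_nonneg.mpr h4),
    mul_nonneg (sub_nonneg.mpr hcν) (sq_nonneg b)]

lemma abs_incr_le (ν : ℝ) (hν₀ : 0 ≤ ν) (hν₁ : ν ≤ 1) (u : ℤ → ℝ) (j : ℤ) :
    |incr ν u j| ≤ |fwd u j| := by
  set a := fwd u (j - 1)
  set b := fwd u j with hb
  set c := fwd u (j + 1)
  rcases eq_or_ne b 0 with h0 | h0
  · have : incr ν u j = 0 := by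
      unfold incr
      rw [← hb, h0, minmod_zero_left, minmod_zero_right]
      ring
    rw [this, h0]
  · have h1 : minmod b c * b ≤ b ^ 2 := by
      have h3 : |minmod b c| ≤ |b| := abs_minmod_le_left b c
      calc minmod b c * b ≤ |minmod b c * b| := le_abs_self _
      _ = |minmod b c| * |b| := abs_mul _ _
      _ ≤ |b| * |b| := by nlinarith [abs_nonneg b]
      _ = b ^ 2 := by rw [← sq_abs]; ring
    have h2 : 0 ≤ minmod a b * b := minmod_mul_right_nonneg a b
    have hc : 0 ≤ ν * (1 - ν) / 2 := by nlinarith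
    have hcν : ν * (1 - ν) / 2 ≤ 1 - ν := by nlinarith
    have hub : incr ν u j * b ≤ b ^ 2 := by
      unfold incr
      nlinarith [mul_nonneg hc h2, mul_nonneg hc (sub_nonneg.mpr h1),
        mul_nonneg (sub_nonneg.mpr hcν) (sq_nonneg b)]
    have hlb : 0 ≤ incr ν u j * b := incr_mul_nonneg ν hν₀ hν₁ u j
    have hbpos : 0 < |b| := abs_pos.mpr h0
    have : |incr ν u j| * |b| ≤ |b| * |b| := by
      rw [← abs_mul]
      rw [abs_of_nonneg hlb]
      calc incr ν u j * b ≤ b ^ 2 := hub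
      _ = |b| * |b| := by rw [← sq_abs]; ring
    exact le_of_mul_le_mul_right this hbpos

lemma abs_sub_of_sign (b e : ℝ) (h1 : 0 ≤ e * b) (h2 : |e| ≤ |b|) :
    |b - e| = |b| - |e| := by
  rcases abs_cases b with ⟨hb1, hb2⟩ | ⟨hb1, hb2⟩ <;>
    rcases abs_cases e with ⟨he1, he2⟩ | ⟨he1, he2⟩ <;>
    rcases abs_cases (b - e) with ⟨hbe1, hbe2⟩ | ⟨hbe1, hbe2⟩ <;>
    nlinarith

lemma step_diff (ν : ℝ) (u : ℤ → ℝ) (j : ℤ) :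
    lwMinmodStep ν u (j + 1) - lwMinmodStep ν u j =
      fwd u j - incr ν u j + incr ν u (j - 1) := by
  have e1 : j + 1 - 1 = j := by ring
  have e2 : j + 1 - 2 = j - 1 := by ring
  have e3 : j - 1 + 1 = j := by ring
  have e4 : j - 1 - 1 = j - 2 := by ring
  have e5 : j + 1 + 1 = j + 2 := by ring
  simp only [lwMinmodStep, fwd, incr, e1, e2, e3, e4, e5]
  ring_nf

/-- For `0 ≤ ν ≤ 1` the minmod flux-limited Lax–Wendroff scheme is
total-variation-diminishing on finitely supported `u : ℤ → ℝ`. -/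
theorem lwMinmod_tvd (ν : ℝ) (hν₀ : 0 ≤ ν) (hν₁ : ν ≤ 1)
    (u : ℤ → ℝ) (hfin : (Function.support u).Finite) :
    ∑' j : ℤ, |lwMinmodStep ν u (j + 1) - lwMinmodStep ν u j| ≤
    ∑' j : ℤ, |u (j + 1) - u j| := by
  classical
  set F : Finset ℤ := hfin.toFinset with hF
  set S : Finset ℤ := F.image (· - 2) ∪ F.image (· - 1) ∪ F ∪ F.image (· + 1) ∪
    F.image (· + 2) with hS
  have g : ∀ k : ℤ, u k ≠ 0 → k ∈ F := fun k hk => by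
    rw [hF, Set.Finite.mem_toFinset]; exact hk
  have hu0 : ∀ j ∉ S, u (j - 2) = 0 ∧ u (j - 1) = 0 ∧ u j = 0 ∧ u (j + 1) = 0 ∧
      u (j + 2) = 0 := by
    intro j hj
    simp only [hS, Finset.mem_union, Finset.mem_image, not_or, not_exists, not_and] at hj
    obtain ⟨⟨⟨⟨h2, h1⟩, h0⟩, hp1⟩, hp2⟩ := hj
    refine ⟨?_, ?_, ?_, ?_, ?_⟩
    · by_contra hne; exact (hp2 _ (g _ hne)) (by ring)
    · by_contra hne; exact (hp1 _ (g _ hne)) (by ring)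
    · by_contra hne; exact h0 (g _ hne)
    · by_contra hne; exact (h1 _ (g _ hne)) (by ring)
    · by_contra hne; exact (h2 _ (g _ hne)) (by ring)
  have hfwd0 : ∀ j ∉ S, fwd u (j - 2) = 0 ∧ fwd u (j - 1) = 0 ∧ fwd u j = 0 ∧
      fwd u (j + 1) = 0 := by
    intro j hj
    obtain ⟨a2, a1, a0, b1, b2⟩ := hu0 j hj
    refine ⟨?_, ?_, ?_, ?_⟩
    · show u (j - 2 + 1) - u (j - 2) = 0
      rw [show j - 2 + 1 = j - 1 by ring, a1, a2]; ring
    · show u (j - 1 + 1) - u (j - 1) = 0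
      rw [show j - 1 + 1 = j by ring, a0, a1]; ring
    · show u (j + 1) - u j = 0
      rw [a0, b1]; ring
    · show u (j + 1 + 1) - u (j + 1) = 0
      rw [show j + 1 + 1 = j + 2 by ring, b1, b2]; ring
  have hincr0 : ∀ j ∉ S, incr ν u j = 0 ∧ incr ν u (j - 1) = 0 := by
    intro j hj
    obtain ⟨a2, a1, a0, b1⟩ := hfwd0 j hj
    constructor
    · unfold incr
      rw [a0, a1, b1, minmod_zero_left]; ring
    · unfold incr
      rw [show j - 1 + 1 = j by ring, show j - 1 - 1 = j - 2 by ring, a0, a1, a2,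
        minmod_zero_left]; ring
  have s3 : Summable fun j : ℤ => |fwd u j| := by
    apply summable_of_ne_finset_zero (s := S)
    intro j hj; rw [(hfwd0 j hj).2.2.1]; simp
  have s4 : Summable fun j : ℤ => |incr ν u j| := by
    apply summable_of_ne_finset_zero (s := S)
    intro j hj; rw [(hincr0 j hj).1]; simp
  have s5 : Summable fun j : ℤ => |incr ν u (j - 1)| := by
    apply summable_of_ne_finset_zero (s := S)
    intro j hj; rw [(hincr0 j hj).2]; simp
  have s1 : Summable fun j : ℤ => |lwMinmodStep ν u (j + 1) - lwMinmodStep ν u j| := by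
    apply summable_of_ne_finset_zero (s := S)
    intro j hj
    rw [step_diff, (hfwd0 j hj).2.2.1, (hincr0 j hj).1, (hincr0 j hj).2]
    simp
  have hptw : ∀ j : ℤ, |lwMinmodStep ν u (j + 1) - lwMinmodStep ν u j| ≤
      (|fwd u j| - |incr ν u j|) + |incr ν u (j - 1)| := by
    intro j
    rw [step_diff]
    calc |fwd u j - incr ν u j + incr ν u (j - 1)| ≤
        |fwd u j - incr ν u j| + |incr ν u (j - 1)| := abs_add_le _ _
      _ = (|fwd u j| - |incr ν u j|) + |incr ν u (j - 1)| := by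
          rw [abs_sub_of_sign _ _ (incr_mul_nonneg ν hν₀ hν₁ u j)
            (abs_incr_le ν hν₀ hν₁ u j)]
  have hshift : ∑' j : ℤ, |incr ν u (j - 1)| = ∑' j : ℤ, |incr ν u j| :=
    (Equiv.subRight (1 : ℤ)).tsum_eq fun j => |incr ν u j|
  have hgoal : ∑' j : ℤ, |u (j + 1) - u j| = ∑' j : ℤ, |fwd u j| := rfl
  rw [hgoal]
  calc ∑' j : ℤ, |lwMinmodStep ν u (j + 1) - lwMinmodStep ν u j|
      ≤ ∑' j : ℤ, ((|fwd u j| - |incr ν u j|) + |incr ν u (j - 1)|) :=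
        Summable.tsum_le_tsum hptw s1 ((s3.sub s4).add s5)
    _ = (∑' j : ℤ, (|fwd u j| - |incr ν u j|)) + ∑' j : ℤ, |incr ν u (j - 1)| :=
        Summable.tsum_add (s3.sub s4) s5
    _ = ((∑' j : ℤ, |fwd u j|) - ∑' j : ℤ, |incr ν u j|) + ∑' j : ℤ, |incr ν u (j - 1)| := by
        rw [Summable.tsum_sub s3 s4]
    _ = ∑' j : ℤ, |fwd u j| := by rw [hshift]; ring
end

section
/- Let 0 ≤ ν ≤ 1 and let u : ℤ → ℝ be finitely supported. With minmod(p, q) = 0 if p·q ≤ 0 and sign(p)·min(|p|, |q|) otherwise, m_{j+1/2} = minmod(u_j − u_{j−1}, u_{j+1} − u_j), and û_j = u_j − ν (u_j − u_{j−1}) − (1/2) ν (1 − ν) (m_{j+1/2} − m_{j−1/2}), the squared discrete L²-norm does not increase: Σ_{j∈ℤ} û_j² ≤ Σ_{j∈ℤ} u_j². -/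
lemma minmod_bounds (p q : ℝ) :
    (minmod p q)^2 ≤ minmod p q * p ∧ minmod p q * p ≤ p^2 ∧
    (minmod p q)^2 ≤ minmod p q * q ∧ minmod p q * q ≤ q^2 := by
  unfold minmod
  by_cases h : p * q ≤ 0
  · rw [if_pos h]
    refine ⟨by norm_num, by simpa using sq_nonneg p, by norm_num, by simpa using sq_nonneg q⟩
  · push_neg at h
    rw [if_neg (not_le.mpr h)]
    rcases lt_trichotomy p 0 with hp | hp | hp
    · have hq : q < 0 := by nlinarith
      rw [Real.sign_of_neg hp, abs_of_neg hp, abs_of_neg hq]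
      have h1 : min (-p) (-q) ≤ -p := min_le_left _ _
      have h2 : min (-p) (-q) ≤ -q := min_le_right _ _
      have h3 : (0:ℝ) ≤ min (-p) (-q) := le_min (by linarith) (by linarith)
      refine ⟨by nlinarith, by nlinarith, by nlinarith, by nlinarith⟩
    · exfalso; rw [hp, zero_mul] at h; exact lt_irrefl 0 h
    · have hq : 0 < q := by nlinarith
      rw [Real.sign_of_pos hp, abs_of_pos hp, abs_of_pos hq]
      have h1 : min p q ≤ p := min_le_left _ _
      have h2 : min p q ≤ q := min_le_right _ _
      have h3 : (0:ℝ) ≤ min p q := le_min hp.le hq.le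
      refine ⟨by nlinarith, by nlinarith, by nlinarith, by nlinarith⟩

lemma cell_ineq (ν x y D : ℝ) (hν₀ : 0 ≤ ν) (hν₁ : ν ≤ 1)
    (hx1 : x^2 ≤ x * D) (hx2 : x * D ≤ D^2)
    (hy1 : y^2 ≤ y * D) (hy2 : y * D ≤ D^2) :
    ν * (x * D) + (1 - ν) * (y * D) + (ν * (1 - ν) / 4) * (x - y)^2 - D^2 ≤ 0 := by
  set q : ℝ := ν * (1 - ν) / 4 with hqdef
  have hq0 : 0 ≤ q := by nlinarith
  have hqν : q ≤ ν := by nlinarith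
  have hq1 : q ≤ 1 - ν := by nlinarith
  have hs0 : 0 ≤ x * D := le_trans (sq_nonneg x) hx1
  have ht0 : 0 ≤ y * D := le_trans (sq_nonneg y) hy1
  by_cases hD : D = 0
  · have hx : x = 0 := by nlinarith
    have hy : y = 0 := by nlinarith
    simp [hx, hy, hD]
  · have hD2 : (0:ℝ) < D^2 := by positivity
    have T1 : 0 ≤ (D^2 - x*D) * (D^2 - y*D) :=
      mul_nonneg (by linarith) (by linarith)
    have T2 : 0 ≤ (1 - ν - q) * ((x*D) * (D^2 - y*D)) :=
      mul_nonneg (by linarith) (mul_nonneg hs0 (by linarith))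
    have T3 : 0 ≤ (ν - q) * ((y*D) * (D^2 - x*D)) :=
      mul_nonneg (by linarith) (mul_nonneg ht0 (by linarith))
    have T4 : 0 ≤ q * ((x*D) * (D^2 - x*D)) :=
      mul_nonneg hq0 (mul_nonneg hs0 (by linarith))
    have T5 : 0 ≤ q * ((y*D) * (D^2 - y*D)) :=
      mul_nonneg hq0 (mul_nonneg ht0 (by linarith))
    have key : 0 ≤ (D^2 - (ν * (x * D) + (1 - ν) * (y * D) + q * (x - y)^2)) * D^2 := by
      nlinarith [T1, T2, T3, T4, T5]
    nlinarith [key, hD2]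

/-- the limited slope `m_{j+1/2}`. -/
noncomputable def auxA (u : ℤ → ℝ) (j : ℤ) : ℝ :=
  minmod (u j - u (j - 1)) (u (j + 1) - u j)

/-- the per-cell energy production. -/
noncomputable def auxG (ν : ℝ) (u : ℤ → ℝ) (j : ℤ) : ℝ :=
  ν * (auxA u j * (u j - u (j - 1))) + (1 - ν) * (auxA u (j - 1) * (u j - u (j - 1)))
    + (ν * (1 - ν) / 4) * (auxA u j - auxA u (j - 1))^2 - (u j - u (j - 1))^2

/-- the telescoping potential. -/
noncomputable def auxV (ν : ℝ) (u : ℤ → ℝ) (j : ℤ) : ℝ :=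
  -(ν * (u j)^2) - ν * (1 - ν) * (auxA u j * u j)

lemma auxA_shift (u : ℤ → ℝ) (j : ℤ) :
    auxA u (j - 1) = minmod (u (j - 1) - u (j - 2)) (u j - u (j - 1)) := by
  unfold auxA
  rw [show j - 1 - 1 = j - 2 from by omega, show j - 1 + 1 = j from by omega]

lemma key_identity (ν : ℝ) (u : ℤ → ℝ) (j : ℤ) :
    (lwMinmodStep ν u j)^2 =
      (u j)^2 + ν * (1 - ν) * auxG ν u j + (auxV ν u j - auxV ν u (j - 1)) := by
  simp only [lwMinmodStep, auxG, auxV, auxA_shift, auxA]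
  ring_nf

/-- For `0 ≤ ν ≤ 1` the minmod flux-limited Lax–Wendroff scheme does not increase the
squared discrete L²-norm on finitely supported `u : ℤ → ℝ`. -/
theorem lwMinmod_l2_stable (ν : ℝ) (hν₀ : 0 ≤ ν) (hν₁ : ν ≤ 1)
    (u : ℤ → ℝ) (hfin : (Function.support u).Finite) :
    ∑' j : ℤ, (lwMinmodStep ν u j) ^ 2 ≤ ∑' j : ℤ, (u j) ^ 2 := by
  classical
  set F : Finset ℤ := insert (0:ℤ) hfin.toFinset with hF
  have hFne : F.Nonempty := ⟨0, Finset.mem_insert_self _ _⟩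
  set lo : ℤ := F.min' hFne
  set hi : ℤ := F.max' hFne
  have hu0 : ∀ j : ℤ, j < lo ∨ hi < j → u j = 0 := by
    intro j hj
    by_contra h
    have hjF : j ∈ F := Finset.mem_insert_of_mem (hfin.mem_toFinset.mpr h)
    rcases hj with hj | hj
    · exact absurd (F.min'_le j hjF) (by omega)
    · exact absurd (F.le_max' j hjF) (by omega)
  set T : Finset ℤ := Finset.Icc (lo - 2) (hi + 2) with hT
  have hvan : ∀ j : ℤ, j ∉ T → u j = 0 ∧ u (j-1) = 0 ∧ u (j-2) = 0 ∧ u (j+1) = 0 := by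
    intro j hj
    rw [hT, Finset.mem_Icc] at hj
    push_neg at hj
    refine ⟨hu0 _ (by omega), hu0 _ (by omega), hu0 _ (by omega), hu0 _ (by omega)⟩
  have hmm0 : minmod 0 0 = 0 := by simp [minmod]
  have hA0 : ∀ j : ℤ, j ∉ T → auxA u j = 0 := by
    intro j hj
    obtain ⟨h1, h2, h3, h4⟩ := hvan j hj
    simp [auxA, h1, h2, h4, hmm0]
  have hA0' : ∀ j : ℤ, j ∉ T → auxA u (j - 1) = 0 := by
    intro j hj
    obtain ⟨h1, h2, h3, h4⟩ := hvan j hj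
    simp [auxA_shift, h1, h2, h3, hmm0]
  have hstep0 : ∀ j : ℤ, j ∉ T → (lwMinmodStep ν u j)^2 = 0 := by
    intro j hj
    obtain ⟨h1, h2, h3, h4⟩ := hvan j hj
    simp [lwMinmodStep, h1, h2, h3, h4, hmm0]
  have hu20 : ∀ j : ℤ, j ∉ T → (u j)^2 = 0 := fun j hj => by
    simp [(hvan j hj).1]
  have hg0 : ∀ j : ℤ, j ∉ T → auxG ν u j = 0 := by
    intro j hj
    simp [auxG, hA0 j hj, hA0' j hj, (hvan j hj).1, (hvan j hj).2.1]
  have hV0 : ∀ j : ℤ, j ∉ T → auxV ν u j = 0 := fun j hj => by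
    simp [auxV, (hvan j hj).1]
  have hV0' : ∀ j : ℤ, j ∉ T → auxV ν u (j - 1) = 0 := fun j hj => by
    simp [auxV, (hvan j hj).2.1]
  have Su : Summable (fun j : ℤ => (u j)^2) := summable_of_ne_finset_zero hu20
  have Sg : Summable (fun j : ℤ => auxG ν u j) := summable_of_ne_finset_zero hg0
  have SV : Summable (fun j : ℤ => auxV ν u j) := summable_of_ne_finset_zero hV0
  have SV' : Summable (fun j : ℤ => auxV ν u (j - 1)) := summable_of_ne_finset_zero hV0'
  have Sg' : Summable (fun j : ℤ => ν * (1 - ν) * auxG ν u j) := Sg.mul_left _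
  have hshift : ∑' j : ℤ, auxV ν u (j - 1) = ∑' j : ℤ, auxV ν u j :=
    (Equiv.subRight (1:ℤ)).tsum_eq (auxV ν u)
  have hgle : ∀ j : ℤ, auxG ν u j ≤ 0 := by
    intro j
    obtain ⟨hx1, hx2, _, _⟩ := minmod_bounds (u j - u (j - 1)) (u (j + 1) - u j)
    obtain ⟨_, _, hy1, hy2⟩ := minmod_bounds (u (j - 1) - u (j - 2)) (u j - u (j - 1))
    have := cell_ineq ν (auxA u j) (auxA u (j - 1)) (u j - u (j - 1)) hν₀ hν₁
      (by rw [auxA]; exact hx1) (by rw [auxA]; exact hx2)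
      (by rw [auxA_shift]; exact hy1) (by rw [auxA_shift]; exact hy2)
    simpa [auxG] using this
  calc ∑' j : ℤ, (lwMinmodStep ν u j) ^ 2
      = ∑' j : ℤ, ((u j)^2 + ν * (1 - ν) * auxG ν u j + (auxV ν u j - auxV ν u (j - 1))) :=
        tsum_congr (key_identity ν u)
    _ = (∑' j : ℤ, (u j)^2 + ∑' j : ℤ, ν * (1 - ν) * auxG ν u j)
          + (∑' j : ℤ, auxV ν u j - ∑' j : ℤ, auxV ν u (j - 1)) := by
        rw [Summable.tsum_add (Su.add Sg') (SV.sub SV'), Summable.tsum_add Su Sg', Summable.tsum_sub SV SV']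
    _ = ∑' j : ℤ, (u j)^2 + ν * (1 - ν) * ∑' j : ℤ, auxG ν u j := by
        rw [hshift, tsum_mul_left]; ring_nf
    _ ≤ ∑' j : ℤ, (u j)^2 := by
        have h1 : ν * (1 - ν) * ∑' j : ℤ, auxG ν u j ≤ 0 :=
          mul_nonpos_of_nonneg_of_nonpos (by nlinarith) (tsum_nonpos hgle)
        linarith
end

section
/- Let R, L, G, C, ℓ be positive reals, T > 0, and let v, i : [0, T] × [0, ℓ] → ℝ be continuously differentiable functions satisfying the Telegrapher's equations C ∂_t v + ∂_x i + G v = 0 and L ∂_t i + ∂_x v + R i = 0 on [0, T] × [0, ℓ]. Then the Lyapunov function V(t) = (1/2) ∫₀^ℓ (C v(t,x)² + L i(t,x)²) dx is differentiable and satisfies the energy identity V′(t) = −(v(t, ℓ) i(t, ℓ) − v(t, 0) i(t, 0)) − ∫₀^ℓ (G v(t,x)² + R i(t,x)²) dx for every t ∈ [0, T]. -/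
/-!
Differentiating under the integral sign (the time derivative of the energy density is jointly
continuous, hence bounded on compacts), the density changes at the rate `C v ∂ₜv + L i ∂ₜi`, which
the two equations turn into `-∂ₓ(v i) - (G v² + R i²)`; integrating the flux `∂ₓ(v i)` over
`[0, ℓ]` leaves only the boundary term.
-/

open MeasureTheory intervalIntegral Function Set

section PartialDerivatives

variable {E : Type*} [NormedAddCommGroup E] [NormedSpace ℝ E] {f : ℝ → ℝ → E}

theorem DifferentiableAt.hasDerivAt_left_fderiv {t x : ℝ}
    (hf : DifferentiableAt ℝ (uncurry f) (t, x)) :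
    HasDerivAt (fun τ => f τ x) (fderiv ℝ (uncurry f) (t, x) (1, 0)) t :=
  hf.hasFDerivAt.comp_hasDerivAt (f := fun τ => (τ, x)) t
    ((hasDerivAt_id' t).prodMk (hasDerivAt_const t x))

theorem DifferentiableAt.hasDerivAt_right_fderiv {t x : ℝ}
    (hf : DifferentiableAt ℝ (uncurry f) (t, x)) :
    HasDerivAt (fun y => f t y) (fderiv ℝ (uncurry f) (t, x) (0, 1)) x :=
  hf.hasFDerivAt.comp_hasDerivAt (f := fun y => (t, y)) x
    ((hasDerivAt_const x t).prodMk (hasDerivAt_id' x))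

theorem ContDiff.continuous_deriv_left (hf : ContDiff ℝ 1 (uncurry f)) :
    Continuous (uncurry fun τ x => deriv (fun s => f s x) τ) := by
  have hdf : Differentiable ℝ (uncurry f) := hf.differentiable one_ne_zero
  have hpartial : (uncurry fun τ x => deriv (fun s => f s x) τ) = fun p => fderiv ℝ (uncurry f) p (1, 0) :=
    funext fun p => (hdf p).hasDerivAt_left_fderiv.deriv
  rw [hpartial]
  exact (hf.continuous_fderiv one_ne_zero).clm_apply continuous_const

theorem ContDiff.continuous_deriv_right (hf : ContDiff ℝ 1 (uncurry f)) :
    Continuous (uncurry fun τ x => deriv (fun y => f τ y) x) := by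
  have hdf : Differentiable ℝ (uncurry f) := hf.differentiable one_ne_zero
  have hpartial : (uncurry fun τ x => deriv (fun y => f τ y) x) = fun p => fderiv ℝ (uncurry f) p (0, 1) :=
    funext fun p => (hdf p).hasDerivAt_right_fderiv.deriv
  rw [hpartial]
  exact (hf.continuous_fderiv one_ne_zero).clm_apply continuous_const

theorem ContDiff.hasDerivAt_intervalIntegral (hf : ContDiff ℝ 1 (uncurry f)) (a b t : ℝ) :
    HasDerivAt (fun τ => ∫ x in a..b, f τ x) (∫ x in a..b, deriv (fun τ => f τ x) t) t := by
  have hdf : Differentiable ℝ (uncurry f) := hf.differentiable one_ne_zero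
  have hf_cont (τ : ℝ) : Continuous (f τ) := hf.continuous.uncurry_left τ
  have hf'_cont := hf.continuous_deriv_left
  obtain ⟨M, hM⟩ := ((isCompact_closedBall t 1).prod isCompact_uIcc).exists_bound_of_continuousOn
    (hf'_cont.continuousOn (s := Metric.closedBall t 1 ×ˢ uIcc a b))
  refine (hasDerivAt_integral_of_dominated_loc_of_deriv_le (bound := fun _ => M)
    (Metric.ball_mem_nhds t one_pos) (.of_forall fun τ => (hf_cont τ).aestronglyMeasurable)
    ((hf_cont t).intervalIntegrable a b)
    (hf'_cont.uncurry_left t).aestronglyMeasurable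
    (.of_forall fun x hx τ hτ =>
      hM (τ, x) ⟨Metric.ball_subset_closedBall hτ, uIoc_subset_uIcc hx⟩)
    intervalIntegrable_const
    (.of_forall fun x _ τ _ => (hdf (τ, x)).hasDerivAt_left_fderiv.differentiableAt.hasDerivAt)).2

end PartialDerivatives

theorem telegrapher_local_energy_balance {v i : ℝ → ℝ} {t C L G R vx ix : ℝ}
    (hv : DifferentiableAt ℝ v t) (hi : DifferentiableAt ℝ i t)
    (h₁ : C * deriv v t + ix + G * v t = 0) (h₂ : L * deriv i t + vx + R * i t = 0) :
    1 / 2 * deriv (fun τ => C * v τ ^ 2 + L * i τ ^ 2) t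
      = -(vx * i t + v t * ix) - (G * v t ^ 2 + R * i t ^ 2) := by
  rw [deriv_fun_add (by fun_prop) (by fun_prop), deriv_const_mul _ (by fun_prop),
    deriv_const_mul _ (by fun_prop), deriv_fun_pow hv, deriv_fun_pow hi]
  linear_combination v t * h₁ + i t * h₂

theorem telegrapher_energy_identity_general (R L G C ℓ T : ℝ)
    (hℓ : 0 < ℓ)
    (v i : ℝ → ℝ → ℝ)
    (hv : ContDiff ℝ 1 (fun p : ℝ × ℝ => v p.1 p.2))
    (hi : ContDiff ℝ 1 (fun p : ℝ × ℝ => i p.1 p.2))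
    (hpde₁ : ∀ t ∈ Set.Icc 0 T, ∀ x ∈ Set.Icc 0 ℓ,
      C * deriv (fun τ => v τ x) t + deriv (fun y => i t y) x + G * v t x = 0)
    (hpde₂ : ∀ t ∈ Set.Icc 0 T, ∀ x ∈ Set.Icc 0 ℓ,
      L * deriv (fun τ => i τ x) t + deriv (fun y => v t y) x + R * i t x = 0) :
    ∀ t ∈ Set.Icc 0 T,
      HasDerivWithinAt
        (fun τ => (1 / 2) * ∫ x in (0:ℝ)..ℓ, (C * v τ x ^ 2 + L * i τ x ^ 2))
        (-(v t ℓ * i t ℓ - v t 0 * i t 0) -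
          ∫ x in (0:ℝ)..ℓ, (G * v t x ^ 2 + R * i t x ^ 2))
        (Set.Icc 0 T) t := by
  intro t ht
  have hv' : Differentiable ℝ (uncurry v) := hv.differentiable one_ne_zero
  have hi' : Differentiable ℝ (uncurry i) := hi.differentiable one_ne_zero
  have hvx_cont := hv.continuous_deriv_right.uncurry_left t
  have hix_cont := hi.continuous_deriv_right.uncurry_left t
  have hV := ((show ContDiff ℝ 1 (uncurry fun τ x => C * v τ x ^ 2 + L * i τ x ^ 2) by
    fun_prop).hasDerivAt_intervalIntegral 0 ℓ t).const_mul (1 / 2)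
  refine (hV.congr_deriv ?_).hasDerivWithinAt
  rw [← intervalIntegral.integral_const_mul]
  calc
    _ = ∫ x in (0:ℝ)..ℓ, -(deriv (fun y => v t y) x * i t x + v t x * deriv (fun y => i t y) x)
        - (G * v t x ^ 2 + R * i t x ^ 2) := by
      refine integral_congr fun x hx => ?_
      rw [uIcc_of_le hℓ.le] at hx
      exact telegrapher_local_energy_balance (hv' (t, x)).hasDerivAt_left_fderiv.differentiableAt
        (hi' (t, x)).hasDerivAt_left_fderiv.differentiableAt (hpde₁ t ht x hx) (hpde₂ t ht x hx)
    _ = _ := by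
      rw [integral_sub ?_ (Continuous.intervalIntegrable (by fun_prop) _ _),
        intervalIntegral.integral_neg, integral_deriv_mul_eq_sub
          (fun x _ => (hv' (t, x)).hasDerivAt_right_fderiv.differentiableAt.hasDerivAt)
          (fun x _ => (hi' (t, x)).hasDerivAt_right_fderiv.differentiableAt.hasDerivAt)
          (hvx_cont.intervalIntegrable _ _) (hix_cont.intervalIntegrable _ _)]
      exact ((hvx_cont.mul (hi.continuous.uncurry_left t)).add
        ((hv.continuous.uncurry_left t).mul hix_cont)).neg.intervalIntegrable _ _

/-- Energy identity for the Telegrapher's equations: if `v`, `i` are `C¹` and satisfy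
`C ∂_t v + ∂_x i + G v = 0`, `L ∂_t i + ∂_x v + R i = 0` on `[0,T] × [0,ℓ]`, then the
Lyapunov function `V(t) = (1/2)∫₀^ℓ (C v² + L i²) dx` is differentiable on `[0,T]` with
`V′(t) = −(v(t,ℓ) i(t,ℓ) − v(t,0) i(t,0)) − ∫₀^ℓ (G v² + R i²) dx`. -/
theorem telegrapher_energy_identity (R L G C ℓ T : ℝ)
    (hR : 0 < R) (hL : 0 < L) (hG : 0 < G) (hC : 0 < C) (hℓ : 0 < ℓ) (hT : 0 < T)
    (v i : ℝ → ℝ → ℝ)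
    (hv : ContDiff ℝ 1 (fun p : ℝ × ℝ => v p.1 p.2))
    (hi : ContDiff ℝ 1 (fun p : ℝ × ℝ => i p.1 p.2))
    (hpde₁ : ∀ t ∈ Set.Icc 0 T, ∀ x ∈ Set.Icc 0 ℓ,
      C * deriv (fun τ => v τ x) t + deriv (fun y => i t y) x + G * v t x = 0)
    (hpde₂ : ∀ t ∈ Set.Icc 0 T, ∀ x ∈ Set.Icc 0 ℓ,
      L * deriv (fun τ => i τ x) t + deriv (fun y => v t y) x + R * i t x = 0) :
    ∀ t ∈ Set.Icc 0 T,
      HasDerivWithinAt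
        (fun τ => (1 / 2) * ∫ x in (0:ℝ)..ℓ, (C * v τ x ^ 2 + L * i τ x ^ 2))
        (-(v t ℓ * i t ℓ - v t 0 * i t 0) -
          ∫ x in (0:ℝ)..ℓ, (G * v t x ^ 2 + R * i t x ^ 2))
        (Set.Icc 0 T) t :=
  telegrapher_energy_identity_general R L G C ℓ T hℓ v i hv hi hpde₁ hpde₂
end

section
/- Let R, L, G, C, ℓ be positive reals, T > 0, and let v, i : [0, T] × [0, ℓ] → ℝ be continuously differentiable functions satisfying C ∂_t v + ∂_x i + G v = 0 and L ∂_t i + ∂_x v + R i = 0 on [0, T] × [0, ℓ], together with the homogeneous boundary conditions v(t, 0) = 0 and v(t, ℓ) = 0 for all t ∈ [0, T]. Then with μ = min(R/L, G/C), the Lyapunov function V(t) = (1/2) ∫₀^ℓ (C v(t,x)² + L i(t,x)²) dx decays exponentially: V(t) ≤ V(0) · exp(−2 μ t) for all t ∈ [0, T]. -/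
/-!
Writing `W = ∫₀^ℓ (C v² + L i²) dx = 2V`, differentiation under the integral sign and the two
equations give `W' = -2 ∫₀^ℓ ∂ₓ(v i) dx - 2 ∫₀^ℓ (G v² + R i²) dx`. The flux term is
`-2 [v i]₀^ℓ = 0` by the boundary conditions, and `μ C ≤ G`, `μ L ≤ R` turn the rest into
`W' ≤ -2μ W`, so Grönwall's inequality yields `W(t) ≤ W(0) e^{-2μt}`.
-/

open MeasureTheory intervalIntegral Metric Set

theorem le_mul_exp_of_hasDerivAt_le_mul {f f' : ℝ → ℝ} {K a b : ℝ}
    (hf : ∀ t ∈ Icc a b, HasDerivAt f (f' t) t) (bound : ∀ t ∈ Ico a b, f' t ≤ K * f t) :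
    ∀ t ∈ Icc a b, f t ≤ f a * Real.exp (K * (t - a)) := by
  intro t ht
  have hgronwall := le_gronwallBound_of_liminf_deriv_right_le (f := f) (f' := f') (ε := 0)
    (fun s hs => (hf s hs).continuousAt.continuousWithinAt)
    (fun s hs r hr => by
      simpa only [slope_def_module, smul_eq_mul] using
        (hf s (Ico_subset_Icc_self hs)).hasDerivWithinAt.liminf_right_slope_le hr)
    le_rfl (fun s hs => by simpa using bound s hs) t ht
  rwa [gronwallBound_ε0] at hgronwall

theorem HasFDerivAt.hasDerivAt_prodMk_left {E : Type*} [NormedAddCommGroup E] [NormedSpace ℝ E]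
    {f : ℝ × ℝ → E} {f' : ℝ × ℝ →L[ℝ] E} {t x : ℝ} (hf : HasFDerivAt f f' (t, x)) :
    HasDerivAt (fun τ => f (τ, x)) (f' (1, 0)) t :=
  hf.comp_hasDerivAt t ((hasDerivAt_id t).prodMk (hasDerivAt_const t x))

theorem hasDerivAt_intervalIntegral_of_contDiff {E : Type*} [NormedAddCommGroup E]
    [NormedSpace ℝ E] {f : ℝ × ℝ → E} (hf : ContDiff ℝ 1 f) (a b t : ℝ) :
    HasDerivAt (fun τ => ∫ x in a..b, f (τ, x))
      (∫ x in a..b, deriv (fun τ => f (τ, x)) t) t := by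
  set f' : ℝ → ℝ → E := fun τ x => fderiv ℝ f (τ, x) (1, 0)
  have hf' : ∀ τ x, HasDerivAt (fun σ => f (σ, x)) (f' τ x) τ := fun τ x =>
    (hf.differentiable one_ne_zero (τ, x)).hasFDerivAt.hasDerivAt_prodMk_left
  have hf'_cont : Continuous fun p : ℝ × ℝ => f' p.1 p.2 :=
    (hf.continuous_fderiv one_ne_zero).clm_apply continuous_const
  have hslice : ∀ τ, Continuous fun x => f (τ, x) := fun τ =>
    hf.continuous.comp (Continuous.prodMk_right τ)
  obtain ⟨M, hM⟩ := ((isCompact_closedBall t 1).prod isCompact_uIcc).exists_bound_of_continuousOn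
    (s := closedBall t 1 ×ˢ uIcc a b) hf'_cont.continuousOn
  simp_rw [(hf' t _).deriv]
  refine (hasDerivAt_integral_of_dominated_loc_of_deriv_le (bound := fun _ => M)
    (ball_mem_nhds t one_pos) (.of_forall fun τ => (hslice τ).aestronglyMeasurable)
    ((hslice t).intervalIntegrable a b)
    (hf'_cont.comp (Continuous.prodMk_right t)).aestronglyMeasurable
    (.of_forall fun x hx τ hτ => hM (τ, x) ⟨ball_subset_closedBall hτ, uIoc_subset_uIcc hx⟩)
    intervalIntegrable_const (.of_forall fun x _ τ _ => hf' τ x)).2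

namespace Telegrapher

variable {R L G C ℓ t : ℝ} {v i : ℝ → ℝ → ℝ}

theorem min_div_mul_energy_le (hC : 0 < C) (hL : 0 < L) (a b : ℝ) :
    min (R / L) (G / C) * (C * a ^ 2 + L * b ^ 2) ≤ G * a ^ 2 + R * b ^ 2 := by
  have hG : min (R / L) (G / C) * C ≤ G := (le_div_iff₀ hC).1 (min_le_right _ _)
  have hR : min (R / L) (G / C) * L ≤ R := (le_div_iff₀ hL).1 (min_le_left _ _)
  nlinarith [mul_le_mul_of_nonneg_right hG (sq_nonneg a),
    mul_le_mul_of_nonneg_right hR (sq_nonneg b)]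

theorem integral_deriv_energy_eq (hv : ContDiff ℝ 1 (fun p : ℝ × ℝ => v p.1 p.2))
    (hi : ContDiff ℝ 1 (fun p : ℝ × ℝ => i p.1 p.2)) (hℓ : 0 ≤ ℓ)
    (hpde₁ : ∀ x ∈ Icc 0 ℓ,
      C * deriv (fun τ => v τ x) t + deriv (fun y => i t y) x + G * v t x = 0)
    (hpde₂ : ∀ x ∈ Icc 0 ℓ,
      L * deriv (fun τ => i τ x) t + deriv (fun y => v t y) x + R * i t x = 0)
    (hbc0 : v t 0 = 0) (hbcℓ : v t ℓ = 0) :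
    ∫ x in (0:ℝ)..ℓ, deriv (fun τ => C * v τ x ^ 2 + L * i τ x ^ 2) t =
      -2 * ∫ x in (0:ℝ)..ℓ, (G * v t x ^ 2 + R * i t x ^ 2) := by
  have hv_x : ContDiff ℝ 1 (fun y => v t y) := hv.comp (contDiff_prodMk_right t)
  have hi_x : ContDiff ℝ 1 (fun y => i t y) := hi.comp (contDiff_prodMk_right t)
  have hv_x' : Continuous (deriv fun y => v t y) := hv_x.continuous_deriv le_rfl
  have hi_x' : Continuous (deriv fun y => i t y) := hi_x.continuous_deriv le_rfl
  have hv_t : ∀ x, Differentiable ℝ (fun τ => v τ x) := fun x =>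
    (hv.comp (contDiff_prodMk_left x)).differentiable one_ne_zero
  have hi_t : ∀ x, Differentiable ℝ (fun τ => i τ x) := fun x =>
    (hi.comp (contDiff_prodMk_left x)).differentiable one_ne_zero
  have hflux : ∫ x in (0:ℝ)..ℓ,
      (deriv (fun y => v t y) x * i t x + v t x * deriv (fun y => i t y) x) = 0 := by
    rw [integral_deriv_mul_eq_sub (fun x _ => (hv_x.differentiable one_ne_zero x).hasDerivAt)
      (fun x _ => (hi_x.differentiable one_ne_zero x).hasDerivAt)
      (hv_x'.intervalIntegrable 0 ℓ) (hi_x'.intervalIntegrable 0 ℓ), hbc0, hbcℓ]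
    ring
  have hpointwise : ∀ x ∈ uIcc 0 ℓ, deriv (fun τ => C * v τ x ^ 2 + L * i τ x ^ 2) t =
      -2 * (deriv (fun y => v t y) x * i t x + v t x * deriv (fun y => i t y) x) +
        -2 * (G * v t x ^ 2 + R * i t x ^ 2) := by
    intro x hx
    rw [uIcc_of_le hℓ] at hx
    have hderiv : HasDerivAt (fun τ => C * v τ x ^ 2 + L * i τ x ^ 2)
        (2 * v t x * (C * deriv (fun τ => v τ x) t) +
          2 * i t x * (L * deriv (fun τ => i τ x) t)) t := by
      refine ((((hv_t x) t).hasDerivAt.pow 2).const_mul C).add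
        ((((hi_t x) t).hasDerivAt.pow 2).const_mul L) |>.congr_deriv ?_
      simp only [Nat.cast_ofNat, Nat.add_one_sub_one, pow_one]
      ring
    rw [hderiv.deriv]
    linear_combination (2 * v t x) * hpde₁ x hx + (2 * i t x) * hpde₂ x hx
  rw [integral_congr hpointwise, intervalIntegral.integral_add
    (Continuous.intervalIntegrable (by fun_prop) _ _)
    (Continuous.intervalIntegrable (by fun_prop) _ _), intervalIntegral.integral_const_mul,
    intervalIntegral.integral_const_mul, hflux]
  ring

theorem integral_deriv_energy_le (hC : 0 < C) (hL : 0 < L)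
    (hv : ContDiff ℝ 1 (fun p : ℝ × ℝ => v p.1 p.2))
    (hi : ContDiff ℝ 1 (fun p : ℝ × ℝ => i p.1 p.2)) (hℓ : 0 ≤ ℓ)
    (hpde₁ : ∀ x ∈ Icc 0 ℓ,
      C * deriv (fun τ => v τ x) t + deriv (fun y => i t y) x + G * v t x = 0)
    (hpde₂ : ∀ x ∈ Icc 0 ℓ,
      L * deriv (fun τ => i τ x) t + deriv (fun y => v t y) x + R * i t x = 0)
    (hbc0 : v t 0 = 0) (hbcℓ : v t ℓ = 0) :
    ∫ x in (0:ℝ)..ℓ, deriv (fun τ => C * v τ x ^ 2 + L * i τ x ^ 2) t ≤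
      -2 * min (R / L) (G / C) * ∫ x in (0:ℝ)..ℓ, (C * v t x ^ 2 + L * i t x ^ 2) := by
  rw [integral_deriv_energy_eq hv hi hℓ hpde₁ hpde₂ hbc0 hbcℓ, mul_assoc,
    ← intervalIntegral.integral_const_mul (min (R / L) (G / C))]
  refine mul_le_mul_of_nonpos_left ?_ (by norm_num : (-2 : ℝ) ≤ 0)
  exact intervalIntegral.integral_mono_on hℓ (Continuous.intervalIntegrable (by fun_prop) _ _)
    (Continuous.intervalIntegrable (by fun_prop) _ _) fun x _ => min_div_mul_energy_le hC hL _ _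

end Telegrapher

theorem telegrapher_lyapunov_decay_general (R L G C ℓ T : ℝ)
    (hL : 0 < L) (hC : 0 < C) (hℓ : 0 < ℓ)
    (v i : ℝ → ℝ → ℝ)
    (hv : ContDiff ℝ 1 (fun p : ℝ × ℝ => v p.1 p.2))
    (hi : ContDiff ℝ 1 (fun p : ℝ × ℝ => i p.1 p.2))
    (hpde₁ : ∀ t ∈ Set.Icc 0 T, ∀ x ∈ Set.Icc 0 ℓ,
      C * deriv (fun τ => v τ x) t + deriv (fun y => i t y) x + G * v t x = 0)
    (hpde₂ : ∀ t ∈ Set.Icc 0 T, ∀ x ∈ Set.Icc 0 ℓ,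
      L * deriv (fun τ => i τ x) t + deriv (fun y => v t y) x + R * i t x = 0)
    (hbc0 : ∀ t ∈ Set.Icc 0 T, v t 0 = 0)
    (hbcℓ : ∀ t ∈ Set.Icc 0 T, v t ℓ = 0) :
    ∀ t ∈ Set.Icc 0 T,
      (1 / 2) * (∫ x in (0:ℝ)..ℓ, (C * v t x ^ 2 + L * i t x ^ 2)) ≤
        ((1 / 2) * ∫ x in (0:ℝ)..ℓ, (C * v 0 x ^ 2 + L * i 0 x ^ 2)) *
          Real.exp (-2 * min (R / L) (G / C) * t) := by
  intro t ht
  have hV : ∀ τ, HasDerivAt (fun σ => ∫ x in (0:ℝ)..ℓ, (C * v σ x ^ 2 + L * i σ x ^ 2))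
      (∫ x in (0:ℝ)..ℓ, deriv (fun σ => C * v σ x ^ 2 + L * i σ x ^ 2) τ) τ := fun τ =>
    hasDerivAt_intervalIntegral_of_contDiff
      (f := fun p : ℝ × ℝ => C * v p.1 p.2 ^ 2 + L * i p.1 p.2 ^ 2) (by fun_prop) 0 ℓ τ
  have hdecay := le_mul_exp_of_hasDerivAt_le_mul (fun τ _ => hV τ) (fun τ hτ => by
    have hτ := Ico_subset_Icc_self hτ
    exact Telegrapher.integral_deriv_energy_le hC hL hv hi hℓ.le (hpde₁ τ hτ) (hpde₂ τ hτ)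
      (hbc0 τ hτ) (hbcℓ τ hτ)) t ht
  rw [sub_zero] at hdecay
  linarith

/-- Exponential decay of the Lyapunov function for the Telegrapher's equations with
homogeneous boundary conditions: if `v`, `i` are `C¹`, satisfy
`C ∂_t v + ∂_x i + G v = 0`, `L ∂_t i + ∂_x v + R i = 0` on `[0,T] × [0,ℓ]` and
`v(t,0) = v(t,ℓ) = 0`, then with `μ = min(R/L, G/C)` the Lyapunov function
`V(t) = (1/2)∫₀^ℓ (C v² + L i²) dx` satisfies `V(t) ≤ V(0)·exp(−2μt)` on `[0,T]`. -/
theorem telegrapher_lyapunov_decay (R L G C ℓ T : ℝ)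
    (hR : 0 < R) (hL : 0 < L) (hG : 0 < G) (hC : 0 < C) (hℓ : 0 < ℓ) (hT : 0 < T)
    (v i : ℝ → ℝ → ℝ)
    (hv : ContDiff ℝ 1 (fun p : ℝ × ℝ => v p.1 p.2))
    (hi : ContDiff ℝ 1 (fun p : ℝ × ℝ => i p.1 p.2))
    (hpde₁ : ∀ t ∈ Set.Icc 0 T, ∀ x ∈ Set.Icc 0 ℓ,
      C * deriv (fun τ => v τ x) t + deriv (fun y => i t y) x + G * v t x = 0)
    (hpde₂ : ∀ t ∈ Set.Icc 0 T, ∀ x ∈ Set.Icc 0 ℓ,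
      L * deriv (fun τ => i τ x) t + deriv (fun y => v t y) x + R * i t x = 0)
    (hbc0 : ∀ t ∈ Set.Icc 0 T, v t 0 = 0)
    (hbcℓ : ∀ t ∈ Set.Icc 0 T, v t ℓ = 0) :
    ∀ t ∈ Set.Icc 0 T,
      (1 / 2) * (∫ x in (0:ℝ)..ℓ, (C * v t x ^ 2 + L * i t x ^ 2)) ≤
        ((1 / 2) * ∫ x in (0:ℝ)..ℓ, (C * v 0 x ^ 2 + L * i 0 x ^ 2)) *
          Real.exp (-2 * min (R / L) (G / C) * t) :=
  telegrapher_lyapunov_decay_general R L G C ℓ T hL hC hℓ v i hv hi hpde₁ hpde₂ hbc0 hbcℓ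
end

section
/- Let R, L, G, C, ℓ be positive reals, T > 0, and let v, i : [0, T] × [0, ℓ] → ℝ be twice continuously differentiable functions satisfying C ∂_t v + ∂_x i + G v = 0 and L ∂_t i + ∂_x v + R i = 0 on [0, T] × [0, ℓ], with boundary conditions v(t, 0) = 0 and v(t, ℓ) = 0 for all t ∈ [0, T]. Then with μ = min(R/L, G/C), the enhanced Lyapunov function V₁(t) = (1/2) ∫₀^ℓ (C v² + L i²) dx + (1/2) ∫₀^ℓ (C (∂_x v)² + L (∂_x i)²) dx satisfies V₁(t) ≤ V₁(0) · exp(−2 μ t) for all t ∈ [0, T]. -/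
/-!
For a `C¹` solution of the telegrapher system, the energy `E = ½∫₀^ℓ (C v² + L i²)` satisfies
`E' = -∫₀^ℓ (G v² + R i²) - [v i]₀^ℓ`. Without boundary flux, the pointwise bound
`μ (C v² + L i²) ≤ G v² + R i²` for `μ = min (R/L) (G/C)` gives `E' ≤ -2μE`, hence
`E(t) ≤ E(0) e^{-2μt}`. Differentiating the system in `x` shows that `(∂ₓv, ∂ₓi)` solves it too,
and its boundary flux vanishes: `v = 0` on the boundary for all times gives `∂ₜv = 0` there, so the
first equation forces `∂ₓi = 0`. The enhanced Lyapunov function is the sum of the two energies.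
-/

open MeasureTheory intervalIntegral

open Set Filter Topology Function Real

noncomputable section

def partialT (F : ℝ → ℝ → ℝ) (t x : ℝ) : ℝ := deriv (fun τ => F τ x) t

def partialX (F : ℝ → ℝ → ℝ) (t x : ℝ) : ℝ := deriv (fun y => F t y) x

section PartialDerivatives

variable {F : ℝ → ℝ → ℝ}

theorem hasDerivAt_partialT (hF : Differentiable ℝ (uncurry F)) (t x : ℝ) :
    HasDerivAt (fun τ => F τ x) (partialT F t x) t :=
  (hF.comp (differentiable_id.prodMk (differentiable_const x)) t).hasDerivAt

theorem hasDerivAt_partialX (hF : Differentiable ℝ (uncurry F)) (t x : ℝ) :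
    HasDerivAt (fun y => F t y) (partialX F t x) x :=
  (hF.comp ((differentiable_const t).prodMk differentiable_id) x).hasDerivAt

theorem uncurry_partialT (hF : Differentiable ℝ (uncurry F)) :
    uncurry (partialT F) = fun p => fderiv ℝ (uncurry F) p (1, 0) := by
  ext ⟨t, x⟩
  exact ((hF (t, x)).hasFDerivAt.comp_hasDerivAt t
    ((hasDerivAt_id t).prodMk (hasDerivAt_const t x))).deriv

theorem uncurry_partialX (hF : Differentiable ℝ (uncurry F)) :
    uncurry (partialX F) = fun p => fderiv ℝ (uncurry F) p (0, 1) := by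
  ext ⟨t, x⟩
  exact ((hF (t, x)).hasFDerivAt.comp_hasDerivAt x
    ((hasDerivAt_const x t).prodMk (hasDerivAt_id x))).deriv

theorem ContDiff.uncurry_partialT {n : WithTop ℕ∞} (hF : ContDiff ℝ (n + 1) (uncurry F)) :
    ContDiff ℝ n (uncurry (partialT F)) := by
  rw [_root_.uncurry_partialT (hF.differentiable (by simp))]
  exact (hF.fderiv_right le_rfl).clm_apply contDiff_const

theorem ContDiff.uncurry_partialX {n : WithTop ℕ∞} (hF : ContDiff ℝ (n + 1) (uncurry F)) :
    ContDiff ℝ n (uncurry (partialX F)) := by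
  rw [_root_.uncurry_partialX (hF.differentiable (by simp))]
  exact (hF.fderiv_right le_rfl).clm_apply contDiff_const

theorem partialX_partialT (hF : ContDiff ℝ 2 (uncurry F)) :
    partialX (partialT F) = partialT (partialX F) := by
  have hd : Differentiable ℝ (fderiv ℝ (uncurry F)) :=
    (hF.fderiv_right (m := 1) (by norm_num)).differentiable one_ne_zero
  have hd₀ : Differentiable ℝ (uncurry F) := hF.differentiable two_ne_zero
  have hT : Differentiable ℝ (uncurry (partialT F)) :=
    (hF.uncurry_partialT (n := 1)).differentiable one_ne_zero
  have hX : Differentiable ℝ (uncurry (partialX F)) :=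
    (hF.uncurry_partialX (n := 1)).differentiable one_ne_zero
  ext t x
  change uncurry (partialX (partialT F)) (t, x) = uncurry (partialT (partialX F)) (t, x)
  rw [_root_.uncurry_partialX hT, _root_.uncurry_partialT hX, _root_.uncurry_partialT hd₀,
    _root_.uncurry_partialX hd₀]
  beta_reduce
  rw [fderiv_clm_apply (hd _) (differentiableAt_const _),
    fderiv_clm_apply (hd _) (differentiableAt_const _)]
  simpa using hF.contDiffAt.isSymmSndFDerivAt (by simp) ((0 : ℝ), (1 : ℝ)) ((1 : ℝ), (0 : ℝ))

end PartialDerivatives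

theorem hasDerivAt_intervalIntegral_of_continuous {E : Type*} [NormedAddCommGroup E]
    [NormedSpace ℝ E] [CompleteSpace E] {g g' : ℝ → ℝ → E} (hg : Continuous (uncurry g))
    (hg' : Continuous (uncurry g')) (hderiv : ∀ t x, HasDerivAt (fun τ => g τ x) (g' t x) t)
    (a b t₀ : ℝ) :
    HasDerivAt (fun t => ∫ x in a..b, g t x) (∫ x in a..b, g' t₀ x) t₀ := by
  obtain ⟨M, hM⟩ := ((isCompact_closedBall t₀ 1).prod (isCompact_uIcc (a := a) (b := b))
    ).exists_bound_of_continuousOn hg'.continuousOn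
  refine (intervalIntegral.hasDerivAt_integral_of_dominated_loc_of_deriv_le
    (bound := fun _ => M) (Metric.closedBall_mem_nhds t₀ one_pos)
    (Eventually.of_forall fun t => (hg.uncurry_left t).aestronglyMeasurable)
    ((hg.uncurry_left t₀).intervalIntegrable a b) (hg'.uncurry_left t₀).aestronglyMeasurable
    (ae_of_all _ fun x hx τ hτ => hM (τ, x) ⟨hτ, uIoc_subset_uIcc hx⟩)
    intervalIntegrable_const (ae_of_all _ fun x _ τ _ => hderiv τ x)).2

theorem le_mul_exp_of_hasDerivAt_le_neg_mul {f f' : ℝ → ℝ} {k a b : ℝ}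
    (hf : ContinuousOn f (Icc a b)) (hf' : ∀ t ∈ Ioo a b, HasDerivAt f (f' t) t)
    (hbound : ∀ t ∈ Ioo a b, f' t ≤ -k * f t) :
    ∀ t ∈ Icc a b, f t ≤ f a * exp (-k * (t - a)) := by
  set g : ℝ → ℝ := fun t => f t * exp (k * (t - a))
  have hg' : ∀ t ∈ Ioo a b, HasDerivAt g ((f' t + k * f t) * exp (k * (t - a))) t :=
    fun t ht => ((hf' t ht).mul (((hasDerivAt_id t).sub_const a).const_mul k).exp).congr_deriv
      (by simp only [id]; ring_nf)
  have hg : AntitoneOn g (Icc a b) := by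
    refine antitoneOn_of_deriv_nonpos (convex_Icc a b) (hf.mul (by fun_prop)) ?_ ?_ <;>
      rw [interior_Icc]
    · exact fun t ht => (hg' t ht).differentiableAt.differentiableWithinAt
    · intro t ht
      rw [(hg' t ht).deriv]
      exact mul_nonpos_of_nonpos_of_nonneg (by linarith [hbound t ht]) (exp_pos _).le
  intro t ht
  calc f t = g t * exp (-k * (t - a)) := by
        simp only [g, mul_assoc, ← exp_add, neg_mul, add_neg_cancel, exp_zero, mul_one]
    _ ≤ g a * exp (-k * (t - a)) :=
      mul_le_mul_of_nonneg_right (hg (left_mem_Icc.2 (ht.1.trans ht.2)) ht ht.1) (exp_pos _).le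
    _ = f a * exp (-k * (t - a)) := by simp [g]

def TelegrapherEq (a b : ℝ) (u w : ℝ → ℝ → ℝ) (t x : ℝ) : Prop :=
  a * partialT u t x + partialX w t x + b * u t x = 0

theorem telegrapherEq_partialX {a b t x : ℝ} {u w : ℝ → ℝ → ℝ}
    (hu : ContDiff ℝ 2 (uncurry u)) (hw : ContDiff ℝ 2 (uncurry w))
    (h : ∀ᶠ y in 𝓝 x, TelegrapherEq a b u w t y) :
    TelegrapherEq a b (partialX u) (partialX w) t x := by
  have hD : HasDerivAt (fun y => a * partialT u t y + partialX w t y + b * u t y)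
      (a * partialX (partialT u) t x + partialX (partialX w) t x + b * partialX u t x) x :=
    (((hasDerivAt_partialX ((hu.uncurry_partialT (n := 1)).differentiable one_ne_zero) t x
      ).const_mul a).add
      (hasDerivAt_partialX ((hw.uncurry_partialX (n := 1)).differentiable one_ne_zero) t x)).add
      ((hasDerivAt_partialX (hu.differentiable two_ne_zero) t x).const_mul b)
  have h₀ : (fun y => a * partialT u t y + partialX w t y + b * u t y) =ᶠ[𝓝 x] fun _ => 0 := h
  rw [TelegrapherEq, ← partialX_partialT hu, ← hD.deriv, h₀.deriv_eq, deriv_const]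

theorem TelegrapherEq.partialX_eq_zero {a b t x : ℝ} {u w : ℝ → ℝ → ℝ}
    (h : TelegrapherEq a b u w t x) (hu : ∀ᶠ τ in 𝓝 t, u τ x = 0) : partialX w t x = 0 := by
  have hu' : (fun τ => u τ x) =ᶠ[𝓝 t] fun _ => 0 := hu
  have hut : partialT u t x = 0 := hu'.deriv_eq.trans (deriv_const t 0)
  simpa [TelegrapherEq, hut, hu.self_of_nhds] using h

def telegrapherEnergy (C L ℓ : ℝ) (v i : ℝ → ℝ → ℝ) (t : ℝ) : ℝ :=
  (1 / 2) * ∫ x in (0 : ℝ)..ℓ, (C * v t x ^ 2 + L * i t x ^ 2)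

section Energy

variable {R L G C ℓ : ℝ} {v i : ℝ → ℝ → ℝ}

theorem hasDerivAt_telegrapherEnergy (hv : ContDiff ℝ 1 (uncurry v))
    (hi : ContDiff ℝ 1 (uncurry i)) (t : ℝ) :
    HasDerivAt (telegrapherEnergy C L ℓ v i)
      (∫ x in (0 : ℝ)..ℓ, (C * v t x * partialT v t x + L * i t x * partialT i t x)) t := by
  have hvt := (hv.uncurry_partialT (n := 0)).continuous
  have hit := (hi.uncurry_partialT (n := 0)).continuous
  have hderiv := hasDerivAt_intervalIntegral_of_continuous
    (g := fun t x => C * v t x ^ 2 + L * i t x ^ 2)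
    (g' := fun t x => 2 * (C * v t x * partialT v t x + L * i t x * partialT i t x))
    (by fun_prop) (by fun_prop) (fun t x =>
      ((((hasDerivAt_partialT (hv.differentiable one_ne_zero) t x).pow 2).const_mul C).add
        (((hasDerivAt_partialT (hi.differentiable one_ne_zero) t x).pow 2).const_mul L)
        ).congr_deriv (by ring)) 0 ℓ t
  exact (hderiv.const_mul (1 / 2)).congr_deriv (by rw [intervalIntegral.integral_const_mul]; ring)

theorem integral_energyRate_eq (hℓ : 0 ≤ ℓ) (hv : ContDiff ℝ 1 (uncurry v))
    (hi : ContDiff ℝ 1 (uncurry i)) {t : ℝ}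
    (h₁ : ∀ x ∈ Ioo 0 ℓ, TelegrapherEq C G v i t x)
    (h₂ : ∀ x ∈ Ioo 0 ℓ, TelegrapherEq L R i v t x)
    (hbc₀ : v t 0 * i t 0 = 0) (hbcℓ : v t ℓ * i t ℓ = 0) :
    ∫ x in (0 : ℝ)..ℓ, (C * v t x * partialT v t x + L * i t x * partialT i t x) =
      -∫ x in (0 : ℝ)..ℓ, (G * v t x ^ 2 + R * i t x ^ 2) := by
  have hvx := (hv.uncurry_partialX (n := 0)).continuous.uncurry_left t
  have hix := (hi.uncurry_partialX (n := 0)).continuous.uncurry_left t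
  have hvc := hv.continuous.uncurry_left t
  have hic := hi.continuous.uncurry_left t
  have hflux : ∫ x in (0 : ℝ)..ℓ, (partialX v t x * i t x + v t x * partialX i t x) = 0 := by
    rw [integral_deriv_mul_eq_sub
      (fun x _ => hasDerivAt_partialX (hv.differentiable one_ne_zero) t x)
      (fun x _ => hasDerivAt_partialX (hi.differentiable one_ne_zero) t x)
      (hvx.intervalIntegrable 0 ℓ) (hix.intervalIntegrable 0 ℓ), hbc₀, hbcℓ, sub_zero]
  calc _ = ∫ x in (0 : ℝ)..ℓ, (-(partialX v t x * i t x + v t x * partialX i t x) -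
        (G * v t x ^ 2 + R * i t x ^ 2)) := by
        refine intervalIntegral.integral_congr_ae ((volume.ae_ne ℓ).mono fun x hxℓ hx => ?_)
        rw [uIoc_of_le hℓ] at hx
        have hx' : x ∈ Ioo 0 ℓ := ⟨hx.1, lt_of_le_of_ne hx.2 hxℓ⟩
        unfold TelegrapherEq at h₁ h₂
        linear_combination v t x * h₁ x hx' + i t x * h₂ x hx'
    _ = _ := by
        rw [intervalIntegral.integral_sub (Continuous.intervalIntegrable (by fun_prop) _ _)
          (Continuous.intervalIntegrable (by fun_prop) _ _), intervalIntegral.integral_neg,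
          hflux, neg_zero, zero_sub]

theorem min_div_mul_add_le (hL : 0 < L) (hC : 0 < C) (a b : ℝ) :
    min (R / L) (G / C) * (C * a ^ 2 + L * b ^ 2) ≤ G * a ^ 2 + R * b ^ 2 := by
  have hG : min (R / L) (G / C) * C ≤ G := (le_div_iff₀ hC).1 (min_le_right _ _)
  have hR : min (R / L) (G / C) * L ≤ R := (le_div_iff₀ hL).1 (min_le_left _ _)
  calc _ = min (R / L) (G / C) * C * a ^ 2 + min (R / L) (G / C) * L * b ^ 2 := by ring
    _ ≤ G * a ^ 2 + R * b ^ 2 := by gcongr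

theorem telegrapherEnergy_le_mul_exp {T : ℝ} (hL : 0 < L) (hC : 0 < C) (hℓ : 0 ≤ ℓ)
    (hv : ContDiff ℝ 1 (uncurry v)) (hi : ContDiff ℝ 1 (uncurry i))
    (h₁ : ∀ t ∈ Ioo 0 T, ∀ x ∈ Ioo 0 ℓ, TelegrapherEq C G v i t x)
    (h₂ : ∀ t ∈ Ioo 0 T, ∀ x ∈ Ioo 0 ℓ, TelegrapherEq L R i v t x)
    (hbc₀ : ∀ t ∈ Ioo 0 T, v t 0 * i t 0 = 0) (hbcℓ : ∀ t ∈ Ioo 0 T, v t ℓ * i t ℓ = 0) :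
    ∀ t ∈ Icc 0 T, telegrapherEnergy C L ℓ v i t ≤
      telegrapherEnergy C L ℓ v i 0 * exp (-2 * min (R / L) (G / C) * t) := by
  have hE := hasDerivAt_telegrapherEnergy (C := C) (L := L) (ℓ := ℓ) hv hi
  have hdissipation : ∀ t ∈ Ioo 0 T,
      ∫ x in (0 : ℝ)..ℓ, (C * v t x * partialT v t x + L * i t x * partialT i t x) ≤
        -(2 * min (R / L) (G / C)) * telegrapherEnergy C L ℓ v i t := by
    intro t ht
    have hvc := hv.continuous.uncurry_left t
    have hic := hi.continuous.uncurry_left t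
    have hmono := intervalIntegral.integral_mono_on (μ := volume) hℓ
      (Continuous.intervalIntegrable (by fun_prop) _ _)
      (Continuous.intervalIntegrable (by fun_prop) _ _)
      fun x _ => min_div_mul_add_le (R := R) (G := G) hL hC (v t x) (i t x)
    rw [intervalIntegral.integral_const_mul] at hmono
    rw [integral_energyRate_eq hℓ hv hi (h₁ t ht) (h₂ t ht) (hbc₀ t ht) (hbcℓ t ht),
      telegrapherEnergy]
    linarith
  intro t ht
  simpa [neg_mul, mul_assoc] using le_mul_exp_of_hasDerivAt_le_neg_mul
    (fun t _ => (hE t).continuousAt.continuousWithinAt) (fun t _ => hE t) hdissipation t ht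

end Energy

end

theorem telegrapher_enhanced_lyapunov_decay_general (R L G C ℓ T : ℝ)
    (hL : 0 < L) (hC : 0 < C) (hℓ : 0 < ℓ)
    (v i : ℝ → ℝ → ℝ)
    (hv : ContDiff ℝ 2 (fun p : ℝ × ℝ => v p.1 p.2))
    (hi : ContDiff ℝ 2 (fun p : ℝ × ℝ => i p.1 p.2))
    (hpde₁ : ∀ t ∈ Set.Icc 0 T, ∀ x ∈ Set.Icc 0 ℓ,
      C * deriv (fun τ => v τ x) t + deriv (fun y => i t y) x + G * v t x = 0)
    (hpde₂ : ∀ t ∈ Set.Icc 0 T, ∀ x ∈ Set.Icc 0 ℓ,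
      L * deriv (fun τ => i τ x) t + deriv (fun y => v t y) x + R * i t x = 0)
    (hbc0 : ∀ t ∈ Set.Icc 0 T, v t 0 = 0)
    (hbcℓ : ∀ t ∈ Set.Icc 0 T, v t ℓ = 0) :
    ∀ t ∈ Set.Icc 0 T,
      ((1 / 2) * (∫ x in (0:ℝ)..ℓ, (C * v t x ^ 2 + L * i t x ^ 2)) +
        (1 / 2) * (∫ x in (0:ℝ)..ℓ,
          (C * (deriv (fun y => v t y) x) ^ 2 + L * (deriv (fun y => i t y) x) ^ 2))) ≤
      ((1 / 2) * (∫ x in (0:ℝ)..ℓ, (C * v 0 x ^ 2 + L * i 0 x ^ 2)) +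
        (1 / 2) * (∫ x in (0:ℝ)..ℓ,
          (C * (deriv (fun y => v 0 y) x) ^ 2 + L * (deriv (fun y => i 0 y) x) ^ 2))) *
        Real.exp (-2 * min (R / L) (G / C) * t) := by
  have hv₂ : ContDiff ℝ 2 (uncurry v) := hv
  have hi₂ : ContDiff ℝ 2 (uncurry i) := hi
  have h₁ : ∀ t ∈ Ioo 0 T, ∀ x ∈ Ioo 0 ℓ, TelegrapherEq C G v i t x :=
    fun t ht x hx => hpde₁ t (Ioo_subset_Icc_self ht) x (Ioo_subset_Icc_self hx)
  have h₂ : ∀ t ∈ Ioo 0 T, ∀ x ∈ Ioo 0 ℓ, TelegrapherEq L R i v t x :=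
    fun t ht x hx => hpde₂ t (Ioo_subset_Icc_self ht) x (Ioo_subset_Icc_self hx)
  have hix : ∀ x ∈ Icc 0 ℓ, (∀ τ ∈ Icc 0 T, v τ x = 0) → ∀ t ∈ Ioo 0 T, partialX i t x = 0 :=
    fun x hx hvx t ht => TelegrapherEq.partialX_eq_zero (hpde₁ t (Ioo_subset_Icc_self ht) x hx)
      (eventually_of_mem (Icc_mem_nhds ht.1 ht.2) hvx)
  have hE₀ := telegrapherEnergy_le_mul_exp hL hC hℓ.le (hv₂.of_le one_le_two)
    (hi₂.of_le one_le_two) h₁ h₂ (fun t ht => by simp [hbc0 t (Ioo_subset_Icc_self ht)])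
    (fun t ht => by simp [hbcℓ t (Ioo_subset_Icc_self ht)])
  have hE₁ := telegrapherEnergy_le_mul_exp hL hC hℓ.le (hv₂.uncurry_partialX (n := 1))
    (hi₂.uncurry_partialX (n := 1))
    (fun t ht x hx => telegrapherEq_partialX hv₂ hi₂
      (eventually_of_mem (Ioo_mem_nhds hx.1 hx.2) (h₁ t ht)))
    (fun t ht x hx => telegrapherEq_partialX hi₂ hv₂
      (eventually_of_mem (Ioo_mem_nhds hx.1 hx.2) (h₂ t ht)))
    (fun t ht => by simp [hix 0 (left_mem_Icc.2 hℓ.le) hbc0 t ht])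
    (fun t ht => by simp [hix ℓ (right_mem_Icc.2 hℓ.le) hbcℓ t ht])
  intro t ht
  have hsum := add_le_add (hE₀ t ht) (hE₁ t ht)
  rwa [← add_mul] at hsum

/-- Exponential decay of the enhanced Lyapunov function for the Telegrapher's equations:
if `v`, `i` are `C²`, satisfy `C ∂_t v + ∂_x i + G v = 0`, `L ∂_t i + ∂_x v + R i = 0` on
`[0,T] × [0,ℓ]` and `v(t,0) = v(t,ℓ) = 0`, then with `μ = min(R/L, G/C)` the enhanced
Lyapunov function `V₁(t) = (1/2)∫₀^ℓ (C v² + L i²) dx + (1/2)∫₀^ℓ (C (∂_x v)² + L (∂_x i)²) dx`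
satisfies `V₁(t) ≤ V₁(0)·exp(−2μt)` on `[0,T]`. -/
theorem telegrapher_enhanced_lyapunov_decay (R L G C ℓ T : ℝ)
    (hR : 0 < R) (hL : 0 < L) (hG : 0 < G) (hC : 0 < C) (hℓ : 0 < ℓ) (hT : 0 < T)
    (v i : ℝ → ℝ → ℝ)
    (hv : ContDiff ℝ 2 (fun p : ℝ × ℝ => v p.1 p.2))
    (hi : ContDiff ℝ 2 (fun p : ℝ × ℝ => i p.1 p.2))
    (hpde₁ : ∀ t ∈ Set.Icc 0 T, ∀ x ∈ Set.Icc 0 ℓ,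
      C * deriv (fun τ => v τ x) t + deriv (fun y => i t y) x + G * v t x = 0)
    (hpde₂ : ∀ t ∈ Set.Icc 0 T, ∀ x ∈ Set.Icc 0 ℓ,
      L * deriv (fun τ => i τ x) t + deriv (fun y => v t y) x + R * i t x = 0)
    (hbc0 : ∀ t ∈ Set.Icc 0 T, v t 0 = 0)
    (hbcℓ : ∀ t ∈ Set.Icc 0 T, v t ℓ = 0) :
    ∀ t ∈ Set.Icc 0 T,
      ((1 / 2) * (∫ x in (0:ℝ)..ℓ, (C * v t x ^ 2 + L * i t x ^ 2)) +
        (1 / 2) * (∫ x in (0:ℝ)..ℓ,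
          (C * (deriv (fun y => v t y) x) ^ 2 + L * (deriv (fun y => i t y) x) ^ 2))) ≤
      ((1 / 2) * (∫ x in (0:ℝ)..ℓ, (C * v 0 x ^ 2 + L * i 0 x ^ 2)) +
        (1 / 2) * (∫ x in (0:ℝ)..ℓ,
          (C * (deriv (fun y => v 0 y) x) ^ 2 + L * (deriv (fun y => i 0 y) x) ^ 2))) *
        Real.exp (-2 * min (R / L) (G / C) * t) :=
  telegrapher_enhanced_lyapunov_decay_general R L G C ℓ T hL hC hℓ v i hv hi hpde₁ hpde₂ hbc0 hbcℓ
end
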